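/- Let ℓ̂ : ℝⁿ × ℝᵐ → ℝ be a convex quadratic function that is strongly convex in its first argument uniformly in the second (there exists κ > 0 such that (x,u) ↦ ℓ̂(x,u) − κ‖x‖² is convex). Let A ∈ ℝ^{n×n}, B ∈ ℝ^{n×m}, d ∈ ℝⁿ define the dynamics x⁺ = Ax + Bu + d, and let X ⊆ ℝⁿ, U ⊆ ℝᵐ be compact convex polyhedra such that the steady-state feasible set { (x,u) ∈ X × U : x = Ax + Bu + d } is nonempty, with (x̄, ū) its unique minimizer of ℓ̂. Then the system is strictly dissipative with a nonnegative affine storage function: there exist a ∈ ℝⁿ, c ∈ ℝ, and b > 0 such that λ(x) := aᵀx + c satisfies λ(x) ≥ 0 for all x ∈ X, and ℓ̂(x,u) − ℓ̂(x̄,ū) + λ(x) − λ(Ax + Bu + d) ≥ b‖x − x̄‖² for all (x,u) ∈ X × U. -/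

import Mathlib

open scoped RealInnerProductSpace InnerProductSpace

/-- Stack a state-input pair into a single vector indexed by `Fin n ⊕ Fin m`. -/
def stack {n m : ℕ} (x : EuclideanSpace ℝ (Fin n)) (u : EuclideanSpace ℝ (Fin m)) :
    Fin n ⊕ Fin m → ℝ :=
  fun i => match i with
  | Sum.inl a => x a
  | Sum.inr b => u b

/-- The successor state `x⁺ = A x + B u + d`. -/
def nextState {n m : ℕ} (A : Matrix (Fin n) (Fin n) ℝ) (B : Matrix (Fin n) (Fin m) ℝ)
    (d : EuclideanSpace ℝ (Fin n)) (x : EuclideanSpace ℝ (Fin n))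
    (u : EuclideanSpace ℝ (Fin m)) : EuclideanSpace ℝ (Fin n) :=
  WithLp.toLp 2 (fun i => (∑ j, A i j * x j) + (∑ j, B i j * u j) + d i)

/-!
Subtracting `κ ‖x - x̄‖²` from `ℓ̂` leaves a convex function `f`, and strong convexity in `x`
keeps `(x̄, ū)` a minimiser of `f` on the steady-state set. That set is cut out of the polytope
`X × U` by the affine equation `x = A x + B u + d`, and for affine constraints convex duality needs
no constraint qualification: there is a Lagrange multiplier `a` with
`ℓ̂ x̄ ū ≤ f (x, u) + ⟪a, x - x⁺⟫` on all of `X × U`, which is the dissipation inequality with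
`b = κ`. The multiplier rule is proved by induction on the number of affine inequality
constraints: a constraint is either inactive and can be dropped, or the minimiser lies on its
hyperplane, where the induction hypothesis applies, and the multiplier inequality is extended off
the hyperplane by a one-dimensional separation argument.
-/

open Set Filter Topology

section Lagrange

variable {E : Type*} [AddCommGroup E] [Module ℝ E] {f : E → ℝ}

theorem AffineMap.convexOn {β : Type*} [AddCommGroup β] [PartialOrder β] [Module ℝ β]
    (g : E →ᵃ[ℝ] β) {s : Set E} (hs : Convex ℝ s) : ConvexOn ℝ s g :=
  ⟨hs, fun _ _ _ _ _ _ _ _ hab => (Convex.combo_affine_apply hab).le⟩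

theorem AffineMap.sum_apply {ι V : Type*} [AddCommGroup V] [Module ℝ V] (s : Finset ι)
    (g : ι → E →ᵃ[ℝ] V) (l : E) : (∑ i ∈ s, g i) l = ∑ i ∈ s, g i l := by
  classical
  induction s using Finset.induction_on with
  | empty => simp
  | insert a s ha ih => simp [Finset.sum_insert ha, ih]

theorem convex_setOf_forall_nonpos {ι : Type*} (s : Finset ι) (c : ι → E →ᵃ[ℝ] ℝ) :
    Convex ℝ {l | ∀ i ∈ s, c i l ≤ 0} := by
  simp only [ofPred_forall]
  exact convex_iInter₂ fun i _ => (convex_Iic 0).affine_preimage (c i)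

theorem AffineMap.exists_retraction_zeroSet (h : E →ᵃ[ℝ] ℝ) {p q : E} (hp : h p = 0)
    (hq : h q ≠ 0) : ∃ π : E →ᵃ[ℝ] E, (∀ l, h (π l) = 0) ∧ ∀ l, h l = 0 → π l = l := by
  refine ⟨AffineMap.id ℝ E -
    (LinearMap.toSpanSingleton ℝ E (q - p)).toAffineMap.comp ((h q)⁻¹ • h), fun l => ?_,
    fun l hl => by simp [hl]⟩
  have hlin : h.linear (q - p) = h q := by simpa [hp] using h.linearMap_vsub q p
  simp only [AffineMap.coe_sub, Pi.sub_apply, AffineMap.coe_id, id_eq, AffineMap.coe_comp,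
    Function.comp_apply, LinearMap.coe_toAffineMap, LinearMap.toSpanSingleton_apply]
  rw [sub_eq_neg_add, ← neg_smul, ← vadd_eq_add, AffineMap.map_vadd, map_smul, hlin, vadd_eq_add,
    smul_eq_mul]
  simp only [AffineMap.coe_smul, Pi.smul_apply, smul_eq_mul]
  field_simp
  ring

/-- `t` is squeezed between `sup {-φ l / h l | h l > 0}` and `inf {φ l / -h l | h l < 0}`; the
two sets are ordered because the segment between points on either side crosses `{h = 0}`. -/
theorem ConvexOn.exists_add_mul_nonneg {φ : E → ℝ} (hφ : ConvexOn ℝ univ φ) (h : E →ᵃ[ℝ] ℝ)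
    (hφh : ∀ l, h l = 0 → 0 ≤ φ l) {l₁ l₂ : E} (hl₁ : h l₁ < 0) (hl₂ : 0 < h l₂) :
    ∃ t : ℝ, ∀ l, 0 ≤ φ l + t * h l := by
  have key : ∀ l l', h l < 0 → 0 < h l' → -(φ l' / h l') * -h l ≤ φ l := by
    intro l l' hl hl'
    have hd : 0 < h l' - h l := by linarith
    have hcomb : 0 ≤ h l' / (h l' - h l) * φ l + -h l / (h l' - h l) * φ l' := by
      have ha : 0 ≤ h l' / (h l' - h l) := by positivity
      have hb : 0 ≤ -h l / (h l' - h l) := div_nonneg (by linarith) hd.le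
      have hab : h l' / (h l' - h l) + -h l / (h l' - h l) = 1 := by field_simp; ring
      refine (hφh _ ?_).trans (hφ.2 trivial trivial ha hb hab)
      rw [Convex.combo_affine_apply hab, smul_eq_mul, smul_eq_mul]
      field_simp
      ring
    rw [← mul_le_mul_iff_of_pos_right hd] at hcomb
    field_simp at hcomb ⊢
    linarith
  set S := (fun l => -(φ l / h l)) '' {l | 0 < h l}
  have hS : S.Nonempty := ⟨_, mem_image_of_mem _ (show l₂ ∈ {l | 0 < h l} from hl₂)⟩
  have hSbdd : BddAbove S := by
    refine ⟨φ l₁ / -h l₁, forall_mem_image.2 fun l' hl' => ?_⟩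
    rw [le_div_iff₀ (neg_pos.2 hl₁)]
    exact key l₁ l' hl₁ hl'
  refine ⟨sSup S, fun l => ?_⟩
  rcases lt_trichotomy (h l) 0 with hl | hl | hl
  · have : sSup S ≤ φ l / -h l :=
      csSup_le hS (forall_mem_image.2 fun l' hl' => by
        rw [le_div_iff₀ (neg_pos.2 hl)]
        exact key l l' hl hl')
    rw [le_div_iff₀ (neg_pos.2 hl)] at this
    linarith
  · simpa [hl] using hφh l hl
  · have : -(φ l / h l) ≤ sSup S := le_csSup hSbdd (mem_image_of_mem _ hl)
    rw [neg_le, ← sub_nonneg] at this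
    have := mul_nonneg this hl.le
    field_simp at this
    linarith

theorem ConvexOn.exists_nonneg_mul_of_le_on_zeroSet (hf : ConvexOn ℝ univ f) (h : E →ᵃ[ℝ] ℝ)
    {m : ℝ} (hle : ∀ l, h l = 0 → m ≤ f l) {p q : E} (hp : h p = 0) (hq : 0 < h q)
    (hfq : f q < m) : ∃ t ≥ 0, ∀ l, m ≤ f l + t * h l := by
  have hneg : h (AffineMap.lineMap q p (2 : ℝ)) < 0 := by
    rw [AffineMap.apply_lineMap, hp, AffineMap.lineMap_apply_module, smul_eq_mul, smul_eq_mul]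
    linarith
  obtain ⟨t, ht⟩ := (hf.add_const (-m)).exists_add_mul_nonneg h
    (fun l hl => by simpa using hle l hl) hneg hq
  simp only [Pi.add_apply] at ht
  refine ⟨t, ?_, fun l => by linarith [ht l]⟩
  nlinarith [ht q]

theorem ConvexOn.isMinOn_of_isMinOn_inter_of_neg {C : Set E} (hf : ConvexOn ℝ C f)
    (h : E →ᵃ[ℝ] ℝ) {p₀ : E} (hp₀ : p₀ ∈ C) (hmin : IsMinOn f (C ∩ {l | h l ≤ 0}) p₀)
    (hneg : h p₀ < 0) : IsMinOn f C p₀ := by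
  refine isMinOn_iff.2 fun q hq => ?_
  by_contra! hlt
  have hq_pos : 0 < h q := by
    by_contra! hq_nonpos
    exact (isMinOn_iff.1 hmin q ⟨hq, hq_nonpos⟩).not_gt hlt
  have hd : h p₀ - h q < 0 := by linarith
  set s := h p₀ / (h p₀ - h q)
  have hs₀ : 0 < s := div_pos_of_neg_of_neg hneg hd
  have hs₁ : s ≤ 1 := (div_le_one_of_neg hd).2 (by linarith)
  have hsum : 1 - s + s = 1 := by ring
  have hzero : h ((1 - s) • p₀ + s • q) = 0 := by
    rw [Convex.combo_affine_apply hsum, smul_eq_mul, smul_eq_mul]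
    simp only [s]
    field_simp [hd.ne]
    ring
  have hmem := hf.1 hp₀ hq (sub_nonneg.2 hs₁) hs₀.le hsum
  have h1 := isMinOn_iff.1 hmin _ ⟨hmem, hzero.le⟩
  have h2 := hf.2 hp₀ hq (sub_nonneg.2 hs₁) hs₀.le hsum
  simp only [smul_eq_mul] at h2
  nlinarith

theorem ConvexOn.exists_lagrange_multipliers_le {ι : Type*} (s : Finset ι)
    (hf : ConvexOn ℝ univ f) (c : ι → E →ᵃ[ℝ] ℝ) {p₀ : E} (hp₀ : ∀ i ∈ s, c i p₀ ≤ 0)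
    (hmin : IsMinOn f {l | ∀ i ∈ s, c i l ≤ 0} p₀) :
    ∃ y : ι → ℝ, (∀ i, 0 ≤ y i) ∧ ∀ l, f p₀ ≤ f l + ∑ i ∈ s, y i * c i l := by
  classical
  induction s using Finset.induction_on generalizing f c with
  | empty => exact ⟨0, fun _ => le_rfl, fun l => by simpa using isMinOn_iff.1 hmin l (by simp)⟩
  | insert a s ha ih =>
    suffices ∃ y : ι → ℝ, (∀ i, 0 ≤ y i) ∧
        ∃ t ≥ 0, ∀ l, f p₀ ≤ f l + t * c a l + ∑ i ∈ s, y i * c i l by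
      obtain ⟨y, hy, t, ht, hyt⟩ := this
      refine ⟨Function.update y a t, fun i => ?_, fun l => ?_⟩
      · rcases eq_or_ne i a with rfl | hi <;> simp [*]
      · rw [Finset.sum_insert ha, Function.update_self, ← add_assoc]
        convert hyt l using 3 with i hi
        rw [Function.update_of_ne (ne_of_mem_of_not_mem hi ha)]
    set C := {l | ∀ i ∈ s, c i l ≤ 0}
    have hp₀C : p₀ ∈ C := fun i hi => hp₀ i (Finset.mem_insert_of_mem hi)
    have hminC : IsMinOn f (C ∩ {l | c a l ≤ 0}) p₀ := by
      convert hmin using 2; ext; simp [C, and_comm]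
    by_cases hinactive : IsMinOn f C p₀
    · obtain ⟨y, hy, hyl⟩ := ih hf c (fun i hi => hp₀ i (Finset.mem_insert_of_mem hi)) hinactive
      exact ⟨y, hy, 0, le_rfl, fun l => by simpa using hyl l⟩
    obtain ⟨q, hqC, hq⟩ : ∃ q ∈ C, f q < f p₀ := by simpa [isMinOn_iff] using hinactive
    have hq_pos : 0 < c a q :=
      lt_of_not_ge fun hq_nonpos => (isMinOn_iff.1 hminC q ⟨hqC, hq_nonpos⟩).not_gt hq
    have hp₀a : c a p₀ = 0 := by
      refine le_antisymm (hp₀ a (Finset.mem_insert_self a s)) (not_lt.1 fun hneg => hinactive ?_)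
      exact (hf.subset (subset_univ _) (convex_setOf_forall_nonpos s c))
        |>.isMinOn_of_isMinOn_inter_of_neg (c a) hp₀C hminC hneg
    obtain ⟨π, hπ_mem, hπ_fix⟩ := (c a).exists_retraction_zeroSet hp₀a hq_pos.ne'
    have hπp₀ : π p₀ = p₀ := hπ_fix p₀ hp₀a
    obtain ⟨y, hy, hyl⟩ := ih (by simpa using hf.comp_affineMap π) (fun i => (c i).comp π)
      (fun i hi => by simpa [hπp₀] using hp₀C i hi) (isMinOn_iff.2 fun l hl => by
        simpa [hπp₀] using isMinOn_iff.1 hminC (π l) ⟨hl, (hπ_mem l).le⟩)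
    set L : E →ᵃ[ℝ] ℝ := ∑ i ∈ s, y i • c i
    have hL : ∀ l, L l = ∑ i ∈ s, y i * c i l := fun l => by simp [L, AffineMap.sum_apply]
    have hLq : L q ≤ 0 := (hL q).trans_le <|
      Finset.sum_nonpos fun i hi => mul_nonpos_of_nonneg_of_nonpos (hy i) (hqC i hi)
    obtain ⟨t, ht, htl⟩ := (hf.add (L.convexOn convex_univ)).exists_nonneg_mul_of_le_on_zeroSet
      (c a) (fun l hl => by simpa [hL, hπ_fix l hl, hπp₀] using hyl l) hp₀a hq_pos
      (by simp only [Pi.add_apply]; linarith)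
    simp only [Pi.add_apply, hL] at htl
    exact ⟨y, hy, t, ht, fun l => by linarith [htl l]⟩

theorem ConvexOn.exists_lagrange_multipliers_le_eq {ι κ : Type*} [Fintype κ] (s : Finset ι)
    (hf : ConvexOn ℝ univ f) (c : ι → E →ᵃ[ℝ] ℝ) (e : κ → E →ᵃ[ℝ] ℝ) {p₀ : E}
    (hp₀c : ∀ i ∈ s, c i p₀ ≤ 0) (hp₀e : ∀ j, e j p₀ = 0)
    (hmin : IsMinOn f {l | (∀ i ∈ s, c i l ≤ 0) ∧ ∀ j, e j l = 0} p₀) :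
    ∃ (y : ι → ℝ) (z : κ → ℝ), (∀ i, 0 ≤ y i) ∧
      ∀ l, f p₀ ≤ f l + ∑ i ∈ s, y i * c i l + ∑ j, z j * e j l := by
  set c' : ι ⊕ κ ⊕ κ → E →ᵃ[ℝ] ℝ := Sum.elim c (Sum.elim e fun j => -e j)
  have hfeas : {l | ∀ i ∈ s.disjSum Finset.univ, c' i l ≤ 0} =
      {l | (∀ i ∈ s, c i l ≤ 0) ∧ ∀ j, e j l = 0} := by
    ext l
    simp [c', le_antisymm_iff, forall_and]
  obtain ⟨y, hy, hyl⟩ := hf.exists_lagrange_multipliers_le (s.disjSum Finset.univ) c'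
    (by simpa [c', hp₀e] using hp₀c) (hfeas ▸ hmin)
  refine ⟨y ∘ Sum.inl, fun j => y (.inr (.inl j)) - y (.inr (.inr j)), fun i => hy _,
    fun l => ?_⟩
  convert hyl l using 1
  simp [c', Finset.sum_disjSum, Fintype.sum_sum_type, sub_mul, add_assoc, ← sub_eq_add_neg]

/-- The polytope is parametrised by barycentric weights `w : E → ℝ`, turning membership into the
affine constraints `w ≥ 0` and `∑ w = 1`. -/
theorem ConvexOn.exists_lagrange_multiplier_convexHull {κ : Type*} [Fintype κ]
    (hf : ConvexOn ℝ univ f) (V : Finset E) (g : E →ᵃ[ℝ] κ → ℝ) {p₀ : E}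
    (hp₀ : p₀ ∈ convexHull ℝ (V : Set E)) (hg : g p₀ = 0)
    (hmin : IsMinOn f (convexHull ℝ (V : Set E) ∩ {p | g p = 0}) p₀) :
    ∃ z : κ → ℝ, ∀ p ∈ convexHull ℝ (V : Set E), f p₀ ≤ f p + z ⬝ᵥ g p := by
  set T : (E → ℝ) →ₗ[ℝ] E := ∑ v ∈ V, (LinearMap.proj v).smulRight v
  have hT : ∀ w, T w = ∑ v ∈ V, w v • v := fun w => by simp [T, LinearMap.sum_apply]
  set total : (E → ℝ) →ᵃ[ℝ] ℝ :=
    (∑ v ∈ V, LinearMap.proj v).toAffineMap - AffineMap.const ℝ (E → ℝ) (1 : ℝ)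
  have htotal : ∀ w, total w = ∑ v ∈ V, w v - 1 := fun w => by simp [total]
  obtain ⟨w₀, hw₀, hw₀1, rfl⟩ := Finset.mem_convexHull'.1 hp₀
  obtain ⟨y, z, hy, hyz⟩ := (hf.comp_affineMap T.toAffineMap).exists_lagrange_multipliers_le_eq V
    (fun v => -(LinearMap.proj v).toAffineMap)
    (fun o : Option κ => o.elim total fun j => (LinearMap.proj j).toAffineMap.comp
      (g.comp T.toAffineMap)) (p₀ := w₀)
    (fun v hv => by simpa using hw₀ v hv) (fun o => by cases o <;> simp [htotal, hw₀1, hg, hT])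
    (isMinOn_iff.2 fun w ⟨hw, hwe⟩ => by
      have hw1 : ∑ v ∈ V, w v = 1 := by simpa [htotal, sub_eq_zero] using hwe none
      have hTw : T w ∈ convexHull ℝ (V : Set E) :=
        Finset.mem_convexHull'.2 ⟨w, fun v hv => by simpa using hw v hv, hw1, (hT w).symm⟩
      simpa [hT] using isMinOn_iff.1 hmin (T w) ⟨hTw, funext fun j => by simpa using hwe (some j)⟩)
  refine ⟨fun j => z (some j), fun p hp => ?_⟩
  obtain ⟨w, hw, hw1, rfl⟩ := Finset.mem_convexHull'.1 hp
  have hnonneg : 0 ≤ ∑ v ∈ V, y v * w v :=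
    Finset.sum_nonneg fun v hv => mul_nonneg (hy v) (hw v hv)
  have := hyz w
  simp only [LinearMap.coe_toAffineMap, Function.comp_apply, hT, AffineMap.coe_neg,
    LinearMap.coe_proj, Pi.neg_apply, Function.eval, mul_neg, Finset.sum_neg_distrib,
    Fintype.sum_option, Option.elim_none, htotal, hw1, sub_self, mul_zero, Option.elim_some,
    AffineMap.coe_comp, zero_add] at this
  simp only [dotProduct]
  linarith

end Lagrange

section StrongConvexity

variable {E F : Type*} [NormedAddCommGroup E] [InnerProductSpace ℝ E] [AddCommGroup F]
  [Module ℝ F] {ℓ : E × F → ℝ} {κ : ℝ}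

theorem norm_one_sub_smul_add_smul_sq (x y : E) (t : ℝ) :
    ‖(1 - t) • x + t • y‖ ^ 2 = (1 - t) * ‖x‖ ^ 2 + t * ‖y‖ ^ 2 - t * (1 - t) * ‖y - x‖ ^ 2 := by
  have hy := norm_add_sq_real x (y - x)
  rw [add_sub_cancel] at hy
  rw [show (1 - t) • x + t • y = x + t • (y - x) by module, norm_add_sq_real, norm_smul,
    real_inner_smul_right, mul_pow, Real.norm_eq_abs, sq_abs]
  linear_combination (-t) * hy

theorem ConvexOn.sub_mul_norm_fst_sub_sq {s : Set (E × F)}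
    (hℓ : ConvexOn ℝ s fun p => ℓ p - κ * ‖p.1‖ ^ 2) (x₀ : E) :
    ConvexOn ℝ s fun p => ℓ p - κ * ‖p.1 - x₀‖ ^ 2 := by
  have hlin := ((2 * κ) • (innerₛₗ ℝ x₀ ∘ₗ LinearMap.fst ℝ E F)).convexOn hℓ.1
  refine ((hℓ.add hlin).add_const (-(κ * ‖x₀‖ ^ 2))).congr fun p _ => ?_
  simp only [LinearMap.coe_smul, LinearMap.coe_comp, coe_innerₛₗ_apply, LinearMap.coe_fst,
    Pi.add_apply, Pi.smul_apply, Function.comp_apply, smul_eq_mul, norm_sub_sq_real,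
    real_inner_comm]
  ring

/-- The inequality `κ (1 - t) ‖p.1 - p₀.1‖² ≤ ℓ p - ℓ p₀`, obtained by comparing `ℓ p₀` with `ℓ`
on the segment `[p₀, p]`, is sharpened to `κ ‖p.1 - p₀.1‖²` by letting `t → 0⁺`. -/
theorem IsMinOn.sub_mul_norm_fst_sub_sq {C : Set (E × F)} {p₀ : E × F} (hmin : IsMinOn ℓ C p₀)
    (hℓ : ConvexOn ℝ C fun p => ℓ p - κ * ‖p.1‖ ^ 2) (hp₀ : p₀ ∈ C) :
    IsMinOn (fun p => ℓ p - κ * ‖p.1 - p₀.1‖ ^ 2) C p₀ := by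
  refine isMinOn_iff.2 fun p hp => ?_
  have key : ∀ t ∈ Ioo (0 : ℝ) 1, κ * (1 - t) * ‖p.1 - p₀.1‖ ^ 2 ≤ ℓ p - ℓ p₀ := by
    rintro t ⟨ht₀, ht₁⟩
    have hconv := hℓ.2 hp₀ hp (sub_nonneg.2 ht₁.le) ht₀.le (by ring)
    have hle := isMinOn_iff.1 hmin _ (hℓ.1 hp₀ hp (sub_nonneg.2 ht₁.le) ht₀.le (by ring))
    simp only [Prod.fst_add, Prod.smul_fst, smul_eq_mul, norm_one_sub_smul_add_smul_sq] at hconv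
    refine le_of_mul_le_mul_left ?_ ht₀
    linarith
  have hlim : Tendsto (fun t : ℝ => κ * (1 - t) * ‖p.1 - p₀.1‖ ^ 2) (𝓝[>] 0)
      (𝓝 (κ * ‖p.1 - p₀.1‖ ^ 2)) := by
    refine tendsto_nhdsWithin_of_tendsto_nhds ?_
    have hcont : Continuous fun t : ℝ => κ * (1 - t) * ‖p.1 - p₀.1‖ ^ 2 := by fun_prop
    simpa using hcont.tendsto 0
  have := le_of_tendsto hlim (eventually_of_mem (Ioo_mem_nhdsGT one_pos) key)
  simp only [sub_self, norm_zero]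
  linarith

end StrongConvexity

section Dynamics

variable {n m : ℕ} (A : Matrix (Fin n) (Fin n) ℝ) (B : Matrix (Fin n) (Fin m) ℝ)
  (d : EuclideanSpace ℝ (Fin n)) (x : EuclideanSpace ℝ (Fin n)) (u : EuclideanSpace ℝ (Fin m))

noncomputable def dynamicsResidual :
    EuclideanSpace ℝ (Fin n) × EuclideanSpace ℝ (Fin m) →ᵃ[ℝ] Fin n → ℝ :=
  ((WithLp.linearEquiv 2 ℝ (Fin n → ℝ)).toLinearMap ∘ₗ
      (LinearMap.fst ℝ _ _ - Matrix.toLpLin 2 2 A ∘ₗ LinearMap.fst ℝ _ _ -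
        Matrix.toLpLin 2 2 B ∘ₗ LinearMap.snd ℝ _ _)).toAffineMap -
    AffineMap.const ℝ _ (WithLp.ofLp d)

theorem dynamicsResidual_apply :
    dynamicsResidual A B d (x, u) = WithLp.ofLp (x - nextState A B d x u) := by
  ext i
  simp only [dynamicsResidual, AffineMap.coe_sub, LinearMap.coe_toAffineMap, LinearMap.coe_comp,
    LinearEquiv.coe_coe, AffineMap.coe_const, Pi.sub_apply, Function.comp_apply,
    LinearMap.sub_apply, LinearMap.coe_fst, LinearMap.coe_snd, Matrix.toLpLin_apply,
    WithLp.linearEquiv_apply, AddEquiv.toEquiv_eq_coe, Equiv.toFun_as_coe, EquivLike.coe_coe,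
    WithLp.addEquiv_apply, WithLp.ofLp_sub, Function.const_apply, Matrix.mulVec, dotProduct,
    nextState, PiLp.sub_apply]
  ring

theorem dynamicsResidual_eq_zero_iff :
    dynamicsResidual A B d (x, u) = 0 ↔ x = nextState A B d x u := by
  rw [dynamicsResidual_apply, WithLp.ofLp_eq_zero, sub_eq_zero]

theorem dotProduct_dynamicsResidual (z : Fin n → ℝ) :
    z ⬝ᵥ dynamicsResidual A B d (x, u) =
      ⟪WithLp.toLp 2 z, x⟫_ℝ - ⟪WithLp.toLp 2 z, nextState A B d x u⟫_ℝ := by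
  rw [← inner_sub_right, EuclideanSpace.inner_eq_star_dotProduct, dynamicsResidual_apply,
    dotProduct_comm]
  rfl

end Dynamics

theorem strict_dissipativity_affine_storage_general
    {n m : ℕ}
    (lhat : EuclideanSpace ℝ (Fin n) → EuclideanSpace ℝ (Fin m) → ℝ)
    -- `lhat` is strongly convex in `x`, uniformly in `u`
    (κ : ℝ) (hκ : 0 < κ)
    (hstrong : ConvexOn ℝ Set.univ
      (fun p : EuclideanSpace ℝ (Fin n) × EuclideanSpace ℝ (Fin m) =>
        lhat p.1 p.2 - κ * ‖p.1‖ ^ 2))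
    -- dynamics
    (A : Matrix (Fin n) (Fin n) ℝ) (B : Matrix (Fin n) (Fin m) ℝ)
    (d : EuclideanSpace ℝ (Fin n))
    -- `X` and `U` are compact convex polyhedra (polytopes)
    (X : Set (EuclideanSpace ℝ (Fin n))) (U : Set (EuclideanSpace ℝ (Fin m)))
    (SX : Finset (EuclideanSpace ℝ (Fin n))) (hX : X = convexHull ℝ (SX : Set _))
    (SU : Finset (EuclideanSpace ℝ (Fin m))) (hU : U = convexHull ℝ (SU : Set _))
    -- the steady-state feasible set is nonempty and `(x̄,ū)` is its unique minimizer
    (xbar : EuclideanSpace ℝ (Fin n)) (ubar : EuclideanSpace ℝ (Fin m))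
    (hfeas : xbar ∈ X ∧ ubar ∈ U ∧ xbar = nextState A B d xbar ubar)
    (hmin : ∀ x ∈ X, ∀ u ∈ U, x = nextState A B d x u → lhat xbar ubar ≤ lhat x u) :
    ∃ (a : EuclideanSpace ℝ (Fin n)) (c : ℝ) (b : ℝ), 0 < b ∧
      (∀ x ∈ X, 0 ≤ ⟪a, x⟫_ℝ + c) ∧
      (∀ x ∈ X, ∀ u ∈ U,
        b * ‖x - xbar‖ ^ 2 ≤
          lhat x u - lhat xbar ubar + (⟪a, x⟫_ℝ + c) - (⟪a, nextState A B d x u⟫_ℝ + c)) := by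
  obtain ⟨hxX, huU, hsteady⟩ := hfeas
  have hXU : convexHull ℝ ((SX ×ˢ SU : Finset _) : Set _) = X ×ˢ U := by
    rw [Finset.coe_product, convexHull_prod, hX, hU]
  set S := convexHull ℝ ((SX ×ˢ SU : Finset _) : Set _) ∩ {p | dynamicsResidual A B d p = 0}
  have hS : Convex ℝ S := (convex_convexHull ℝ _).inter
    ((convex_singleton 0).affine_preimage (dynamicsResidual A B d))
  have hsteadyS : (xbar, ubar) ∈ S :=
    ⟨hXU ▸ ⟨hxX, huU⟩, (dynamicsResidual_eq_zero_iff A B d _ _).2 hsteady⟩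
  have hminℓ : IsMinOn (fun p : EuclideanSpace ℝ (Fin n) × EuclideanSpace ℝ (Fin m) =>
      lhat p.1 p.2) S (xbar, ubar) := isMinOn_iff.2 fun p ⟨hpXU, hp⟩ => by
    rw [hXU] at hpXU
    exact hmin p.1 hpXU.1 p.2 hpXU.2 ((dynamicsResidual_eq_zero_iff A B d p.1 p.2).1 hp)
  obtain ⟨z, hz⟩ := (hstrong.sub_mul_norm_fst_sub_sq xbar).exists_lagrange_multiplier_convexHull
    (SX ×ˢ SU) (dynamicsResidual A B d) hsteadyS.1 hsteadyS.2
    (hminℓ.sub_mul_norm_fst_sub_sq (hstrong.subset (subset_univ _) hS) hsteadyS)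
  obtain ⟨x₀, -, hx₀⟩ := (hX ▸ SX.finite_toSet.isCompact_convexHull ℝ : IsCompact X).exists_isMinOn
    ⟨xbar, hxX⟩ (continuous_const.inner (𝕜 := ℝ) continuous_id).continuousOn
  refine ⟨WithLp.toLp 2 z, -⟪WithLp.toLp 2 z, x₀⟫_ℝ, κ, hκ,
    fun x hx => by simpa using isMinOn_iff.1 hx₀ x hx, fun x hx u hu => ?_⟩
  have hdual := hz (x, u) (hXU ▸ ⟨hx, hu⟩)
  rw [dotProduct_dynamicsResidual] at hdual
  simp only [sub_self, norm_zero] at hdual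
  linarith

/-- Strict dissipativity with a nonnegative affine storage function for a
linear system with convex quadratic stage cost that is strongly convex in the state, over
compact convex polyhedral (polytopic) constraint sets, at the unique optimal steady state
`(x̄, ū)`. -/
theorem strict_dissipativity_affine_storage
    {n m : ℕ}
    (lhat : EuclideanSpace ℝ (Fin n) → EuclideanSpace ℝ (Fin m) → ℝ)
    -- `lhat` is a convex quadratic function
    (Q : Matrix (Fin n ⊕ Fin m) (Fin n ⊕ Fin m) ℝ) (qvec : (Fin n ⊕ Fin m) → ℝ) (r : ℝ)
    (hQsymm : Q.IsSymm) (hQpsd : Q.PosSemidef)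
    (hquad : ∀ x u, lhat x u =
      (1 / 2) * (∑ i, ∑ j, stack x u i * Q i j * stack x u j)
        + (∑ i, qvec i * stack x u i) + r)
    -- `lhat` is strongly convex in `x`, uniformly in `u`
    (κ : ℝ) (hκ : 0 < κ)
    (hstrong : ConvexOn ℝ Set.univ
      (fun p : EuclideanSpace ℝ (Fin n) × EuclideanSpace ℝ (Fin m) =>
        lhat p.1 p.2 - κ * ‖p.1‖ ^ 2))
    -- dynamics
    (A : Matrix (Fin n) (Fin n) ℝ) (B : Matrix (Fin n) (Fin m) ℝ)
    (d : EuclideanSpace ℝ (Fin n))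
    -- `X` and `U` are compact convex polyhedra (polytopes)
    (X : Set (EuclideanSpace ℝ (Fin n))) (U : Set (EuclideanSpace ℝ (Fin m)))
    (SX : Finset (EuclideanSpace ℝ (Fin n))) (hX : X = convexHull ℝ (SX : Set _))
    (SU : Finset (EuclideanSpace ℝ (Fin m))) (hU : U = convexHull ℝ (SU : Set _))
    -- the steady-state feasible set is nonempty and `(x̄,ū)` is its unique minimizer
    (xbar : EuclideanSpace ℝ (Fin n)) (ubar : EuclideanSpace ℝ (Fin m))
    (hfeas : xbar ∈ X ∧ ubar ∈ U ∧ xbar = nextState A B d xbar ubar)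
    (hmin : ∀ x ∈ X, ∀ u ∈ U, x = nextState A B d x u → lhat xbar ubar ≤ lhat x u)
    (huniq : ∀ x ∈ X, ∀ u ∈ U, x = nextState A B d x u →
      lhat x u = lhat xbar ubar → x = xbar ∧ u = ubar) :
    ∃ (a : EuclideanSpace ℝ (Fin n)) (c : ℝ) (b : ℝ), 0 < b ∧
      (∀ x ∈ X, 0 ≤ ⟪a, x⟫_ℝ + c) ∧
      (∀ x ∈ X, ∀ u ∈ U,
        b * ‖x - xbar‖ ^ 2 ≤
          lhat x u - lhat xbar ubar + (⟪a, x⟫_ℝ + c) - (⟪a, nextState A B d x u⟫_ℝ + c)) :=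
  strict_dissipativity_affine_storage_general lhat κ hκ hstrong A B d X U SX hX SU hU xbar ubar
    hfeas hmin
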